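/- arXiv:2601.04972 — 2 statements merged into one kernel-verified Lean document; each statement's English description precedes it below -/
import Mathlib

section
/- Let K be a non-archimedean GVF, i.e. a GVF whose height h satisfies the strong triangle inequality h(x+y) ≤ h(x,y). Define ĥ(x) := h(x,1) for x ∈ K× and set K_const := {x ∈ K | x = 0 or ĥ(x) = 0}. Then K_const is a subfield of K: it contains 0 and 1, and is closed under addition, negation, multiplication, and inversion of nonzero elements. -/
/-- A GVF height: a real-valued height on nonzero finite tuples over `K`
(indexed by arbitrary finite types), satisfying the GVF axioms. -/
structure GVFHeight (K : Type) [Field K] : Type 1 where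
  /-- the height of a (nonzero) finite tuple -/
  h : ∀ {ι : Type} [Fintype ι], (ι → K) → ℝ
  /-- invariance under permutations / reindexing -/
  reindex : ∀ {ι κ : Type} [Fintype ι] [Fintype κ] (e : ι ≃ κ) (x : κ → K),
    h (x ∘ e) = h x
  /-- height of one: h(1,1) = 0 -/
  h_one_one : h (fun _ : Fin 2 => (1 : K)) = 0
  /-- product formula : h(x) = 0 for a single nonzero x -/
  product_formula : ∀ x : K, x ≠ 0 → h (fun _ : Fin 1 => x) = 0
  /-- additivity under Segre product -/
  segre : ∀ {ι κ : Type} [Fintype ι] [Fintype κ] (x : ι → K) (y : κ → K),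
    x ≠ 0 → y ≠ 0 → h (fun p : ι × κ => x p.1 * y p.2) = h x + h y
  /-- monotonicity: h(x) ≤ h(x,y) -/
  mono : ∀ {ι κ : Type} [Fintype ι] [Fintype κ] (x : ι → K) (y : κ → K),
    x ≠ 0 → h x ≤ h (Sum.elim x y)

/-- A non-archimedean GVF height: a GVF height satisfying the strong triangle
inequality `h(x+y) ≤ h(x,y)`. -/
structure NonArchGVFHeight (K : Type) [Field K] extends GVFHeight K where
  /-- strong triangle inequality -/
  strong_triangle : ∀ {ι : Type} [Fintype ι] (x y : ι → K),
    x ≠ 0 → y ≠ 0 → x + y ≠ 0 → h (x + y) ≤ h (Sum.elim x y)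

/-!
The function `ĥ(x) = h(x, 1)` is nonnegative (monotonicity and the product formula), satisfies
`ĥ(xy) ≤ ĥ(x) + ĥ(y)` because `(xy, 1)` is a subtuple of `(x, 1) ⊗ (y, 1)`, and, by the strong
triangle inequality, `ĥ(x + y) ≤ h(x, 1, y, 0) = h(x, 1, y) ≤ ĥ(x) + ĥ(y)`. It is invariant under
`x ↦ x⁻¹` (scale `(x, 1)` by `x⁻¹`) and under `x ↦ -x` (as `ĥ(-1) = 0`). Hence the zero set of `ĥ`
is a subfield, and it contains `0` because `h(1, 0) = 0`.
-/

namespace GVFHeight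

variable {K : Type} [Field K] (G : GVFHeight K)

theorem pair_ne_zero (x : K) : ![x, 1] ≠ 0 := fun h => one_ne_zero (congrFun h 1)

theorem h_comp_le {ι κ : Type} [Fintype ι] [Fintype κ] (y : κ → K) {f : ι → κ}
    (hf : Function.Injective f) (hne : y ∘ f ≠ 0) : G.h (y ∘ f) ≤ G.h y := by
  classical
  let e : ι ⊕ {k // k ∉ Set.range f} ≃ κ :=
    (Equiv.sumCongr (Equiv.ofInjective f hf) (Equiv.refl _)).trans
      (Equiv.sumCompl (· ∈ Set.range f))
  calc G.h (y ∘ f) ≤ G.h (Sum.elim (y ∘ f) fun k : {k // k ∉ Set.range f} => y k) :=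
        G.mono _ _ hne
    _ = G.h (y ∘ e) := by congr 1; funext s; rcases s with i | k <;> rfl
    _ = G.h y := G.reindex e y

theorem h_nonneg {ι : Type} [Fintype ι] {y : ι → K} (hy : y ≠ 0) : 0 ≤ G.h y := by
  obtain ⟨i, hi⟩ := Function.ne_iff.mp hy
  calc 0 = G.h (y ∘ fun _ : Fin 1 => i) := (G.product_formula (y i) hi).symm
    _ ≤ G.h y := G.h_comp_le y (fun _ _ _ => Subsingleton.elim _ _) fun h => hi (congrFun h 0)

theorem h_le_add_of_subtuple {ι κ μ : Type} [Fintype ι] [Fintype κ] [Fintype μ]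
    (x : ι → K) (y : κ → K) {z : μ → K} {f : μ → ι × κ} (hf : Function.Injective f)
    (hz : ∀ m, z m = x (f m).1 * y (f m).2) (hz0 : z ≠ 0) : G.h z ≤ G.h x + G.h y := by
  obtain ⟨m, hm⟩ := Function.ne_iff.mp hz0
  have hxy : x (f m).1 * y (f m).2 ≠ 0 := hz m ▸ hm
  have hx : x ≠ 0 := fun h => left_ne_zero_of_mul hxy (congrFun h _)
  have hy : y ≠ 0 := fun h => right_ne_zero_of_mul hxy (congrFun h _)
  have hzf : z = (fun p : ι × κ => x p.1 * y p.2) ∘ f := funext hz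
  rw [← G.segre x y hx hy, hzf]
  exact G.h_comp_le _ hf (hzf ▸ hz0)

theorem h_smul {ι : Type} [Fintype ι] {c : K} (hc : c ≠ 0) {x : ι → K} (hx : x ≠ 0) :
    G.h (c • x) = G.h x := by
  have hs := G.segre (fun _ : Fin 1 => c) x (fun h => hc (congrFun h 0)) hx
  rw [G.product_formula c hc, zero_add] at hs
  rw [← hs, ← G.reindex (Equiv.uniqueProd ι (Fin 1)).symm]
  rfl

theorem h_swap (a b : K) : G.h ![a, b] = G.h ![b, a] := by
  rw [← G.reindex (Equiv.swap 0 1) ![b, a]]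
  congr 1
  funext i
  fin_cases i <;> simp

theorem h_const_one_three : G.h (fun _ : Fin 3 => (1 : K)) = 0 := by
  have hle := G.h_le_add_of_subtuple (fun _ : Fin 2 => (1 : K)) (fun _ : Fin 2 => (1 : K))
    (f := ![(0, 0), (0, 1), (1, 0)]) (by decide) (fun _ => (mul_one 1).symm)
    fun h => one_ne_zero (congrFun h 0)
  rw [G.h_one_one, add_zero] at hle
  exact le_antisymm hle (G.h_nonneg fun h => one_ne_zero (congrFun h 0))

theorem h_one_zero : G.h ![(1 : K), 0] = 0 := by
  set v : Fin 2 → K := ![1, 0]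
  have hv : v ≠ 0 := fun h => one_ne_zero (congrFun h 0)
  -- `v ⊗ v = (1, 0, 0, 0)` is a subtuple of `v ⊗ (1, 1, 1) = (1, 1, 1, 0, 0, 0)`
  have hle := G.h_le_add_of_subtuple v (fun _ : Fin 3 => (1 : K))
    (z := fun p : Fin 2 × Fin 2 => v p.1 * v p.2)
    (f := fun p => ![![(0, 0), (1, 0)], ![(1, 1), (1, 2)]] p.1 p.2) (by decide)
    (by rintro ⟨i, j⟩; fin_cases i <;> fin_cases j <;> simp [v])
    fun h => by simpa [v] using congrFun h (0, 0)
  rw [G.segre v v hv hv, G.h_const_one_three] at hle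
  linarith [G.h_nonneg hv]

theorem h_one_neg_one : G.h ![(1 : K), -1] = 0 := by
  set v : Fin 2 → K := ![1, -1]
  have hv : v ≠ 0 := fun h => one_ne_zero (congrFun h 0)
  have h1 : (fun _ : Fin 2 => (1 : K)) ≠ 0 := fun h => one_ne_zero (congrFun h 0)
  -- `v i = (-1) ^ i`, so `v (i + j) * v j = v i`
  let e : Fin 2 × Fin 2 ≃ Fin 2 × Fin 2 :=
    Equiv.ofBijective (fun p => (p.1 + p.2, p.2)) (by decide)
  have key : G.h (fun p : Fin 2 × Fin 2 => v p.1 * v p.2) =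
      G.h fun p : Fin 2 × Fin 2 => v p.1 * (fun _ : Fin 2 => (1 : K)) p.2 := by
    rw [← G.reindex e]
    congr 1
    funext p
    rcases p with ⟨i, j⟩
    fin_cases i <;> fin_cases j <;> simp [v, e]
  rw [G.segre v v hv hv, G.segre v _ hv h1, G.h_one_one] at key
  linarith

def hhat (x : K) : ℝ := G.h ![x, 1]

theorem hhat_nonneg (x : K) : 0 ≤ G.hhat x := G.h_nonneg (pair_ne_zero x)

theorem hhat_zero : G.hhat 0 = 0 := by rw [hhat, h_swap, h_one_zero]

theorem hhat_one : G.hhat 1 = 0 := by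
  rw [hhat, ← G.h_one_one]
  congr 1
  funext i
  fin_cases i <;> rfl

theorem hhat_neg_one : G.hhat (-1) = 0 := by rw [hhat, h_swap, h_one_neg_one]

theorem hhat_mul (x y : K) : G.hhat (x * y) ≤ G.hhat x + G.hhat y :=
  G.h_le_add_of_subtuple ![x, 1] ![y, 1] (f := ![(0, 0), (1, 1)]) (by decide)
    (fun m => by fin_cases m <;> simp) (pair_ne_zero _)

theorem hhat_neg (x : K) : G.hhat (-x) = G.hhat x := by
  have hle (y : K) : G.hhat (-y) ≤ G.hhat y := by
    simpa [G.hhat_neg_one] using G.hhat_mul (-1) y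
  exact le_antisymm (hle x) (by simpa using hle (-x))

theorem hhat_inv (x : K) : G.hhat x⁻¹ = G.hhat x := by
  rcases eq_or_ne x 0 with rfl | hx
  · rw [inv_zero]
  have hscale : x⁻¹ • ![x, 1] = ![1, x⁻¹] := by
    funext i
    fin_cases i <;> simp [hx]
  rw [hhat, h_swap, ← hscale, G.h_smul (inv_ne_zero hx) (pair_ne_zero x), hhat]

theorem h_triple_le_hhat_add_hhat (x y : K) : G.h ![x, 1, y] ≤ G.hhat x + G.hhat y :=
  G.h_le_add_of_subtuple ![x, 1] ![y, 1] (f := ![(0, 1), (1, 1), (1, 0)]) (by decide)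
    (fun m => by fin_cases m <;> simp) fun h => one_ne_zero (congrFun h 1)

end GVFHeight

namespace NonArchGVFHeight

variable {K : Type} [Field K] (G : NonArchGVFHeight K)

theorem hhat_add (x y : K) : G.hhat (x + y) ≤ G.hhat x + G.hhat y := by
  rcases eq_or_ne y 0 with rfl | hy
  · simpa using G.hhat_nonneg 0
  have hy0 : ![y, 0] ≠ 0 := fun h => hy (congrFun h 0)
  calc G.hhat (x + y) = G.h (![x, 1] + ![y, 0]) := by simp [GVFHeight.hhat]
    _ ≤ G.h (Sum.elim ![x, 1] ![y, 0]) :=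
        G.strong_triangle _ _ (GVFHeight.pair_ne_zero x) hy0 (by simp)
    _ ≤ G.h ![x, 1, y] + G.h ![(1 : K), 0] :=
        G.h_le_add_of_subtuple _ _ (f := Sum.elim ![(0, 0), (1, 0)] ![(2, 0), (0, 1)])
          (by decide) (by rintro (m | m) <;> fin_cases m <;> simp)
          fun h => one_ne_zero (congrFun h (Sum.inl 1))
    _ = G.h ![x, 1, y] := by rw [G.h_one_zero, add_zero]
    _ ≤ G.hhat x + G.hhat y := G.h_triple_le_hhat_add_hhat x y

def constField : Subfield K where
  carrier := {x | G.hhat x = 0}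
  zero_mem' := G.hhat_zero
  one_mem' := G.hhat_one
  add_mem' := by
    rintro a b (ha : G.hhat a = 0) (hb : G.hhat b = 0)
    exact le_antisymm (by linarith [G.hhat_add a b]) (G.hhat_nonneg _)
  mul_mem' := by
    rintro a b (ha : G.hhat a = 0) (hb : G.hhat b = 0)
    exact le_antisymm (by linarith [G.hhat_mul a b]) (G.hhat_nonneg _)
  neg_mem' := fun {a} ha => (G.hhat_neg a).trans ha
  inv_mem' := fun a ha => (G.hhat_inv a).trans ha

theorem mem_constField {x : K} : x ∈ G.constField ↔ G.hhat x = 0 := Iff.rfl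

end NonArchGVFHeight

/-- The constant field `{x | x = 0 ∨ ĥ(x) = 0}` of a non-archimedean GVF
is a subfield of `K`. -/
theorem nonarch_gvf_constant_subfield {K : Type} [Field K]
    (G : NonArchGVFHeight K) :
    ∃ F : Subfield K, ∀ x : K, x ∈ F ↔ (x = 0 ∨ G.h ![x, 1] = 0) :=
  ⟨G.constField, fun _ =>
    G.mem_constField.trans (or_iff_right_of_imp fun hx => hx ▸ G.hhat_zero).symm⟩
end

section
/- Let g(x) = B₂(fract(x)) with B₂(t) = t² − t + 1/6, which is differentiable exactly on ℝ ∖ ℤ with a derivative jump of −2 at each integer. Let p₁,…,pₙ and p′₁,…,p′ₙ be real numbers, and suppose the function F(x) = Σᵢ g(x − pᵢ) − Σᵢ g(x − p′ᵢ) is differentiable at every point of ℝ. Then the multisets {p₁ mod 1, …, pₙ mod 1} and {p′₁ mod 1, …, p′ₙ mod 1} coincide, i.e. the images of (pᵢ) and (p′ᵢ) in ℝ/ℤ agree as multisets. -/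
/-! The right and left derivatives of `x ↦ B₂(fract x)` at `x` are `2 fract x - 1` and
`2 (x + 1 - ⌈x⌉) - 1`, which differ by `2` exactly when `x` is an integer. Since `F` is
differentiable at `c`, its one-sided derivatives there agree, so the jumps of the terms
`g (x - pᵢ)` and `g (x - p′ᵢ)` at `c` balance: as many `pᵢ` as `p′ᵢ` are congruent to `c`
mod 1. -/

open Set Finset

lemma HasDerivWithinAt.comp_sub_const {𝕜 F : Type*} [NontriviallyNormedField 𝕜]
    [NormedAddCommGroup F] [NormedSpace 𝕜 F] {f : 𝕜 → F} {f' : F} {x a : 𝕜} {s : Set 𝕜}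
    (hf : HasDerivWithinAt f f' s (x - a)) :
    HasDerivWithinAt (fun y => f (y - a)) f' ((· - a) ⁻¹' s) x := by
  simpa [Function.comp_def] using
    hf.scomp x ((hasDerivAt_id x).sub_const a).hasDerivWithinAt (mapsTo_preimage _ s)

lemma eq_of_hasDerivWithinAt_Ici_of_hasDerivWithinAt_Iic {f : ℝ → ℝ} {a b x : ℝ}
    (hf : DifferentiableAt ℝ f x) (ha : HasDerivWithinAt f a (Ici x) x)
    (hb : HasDerivWithinAt f b (Iic x) x) : a = b :=
  ((uniqueDiffWithinAt_Ici x).eq_deriv _ ha hf.hasDerivAt.hasDerivWithinAt).trans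
    ((uniqueDiffWithinAt_Iic x).eq_deriv _ hf.hasDerivAt.hasDerivWithinAt hb)

theorem sum_sub_eq_sum_sub_of_differentiableAt {ι : Type*} [Fintype ι] {φ R L : ℝ → ℝ}
    (hR : ∀ x, HasDerivWithinAt φ (R x) (Ici x) x)
    (hL : ∀ x, HasDerivWithinAt φ (L x) (Iic x) x)
    (p p' : ι → ℝ) {c : ℝ}
    (hF : DifferentiableAt ℝ (fun x => ∑ i, φ (x - p i) - ∑ i, φ (x - p' i)) c) :
    ∑ i, (L (c - p i) - R (c - p i)) = ∑ i, (L (c - p' i) - R (c - p' i)) := by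
  have right : HasDerivWithinAt (fun x => ∑ i, φ (x - p i) - ∑ i, φ (x - p' i))
      (∑ i, R (c - p i) - ∑ i, R (c - p' i)) (Ici c) c := by
    have h a : HasDerivWithinAt (fun x => φ (x - a)) (R (c - a)) (Ici c) c := by
      simpa using (hR (c - a)).comp_sub_const
    exact (HasDerivWithinAt.fun_sum fun i _ => h (p i)).sub (.fun_sum fun i _ => h (p' i))
  have left : HasDerivWithinAt (fun x => ∑ i, φ (x - p i) - ∑ i, φ (x - p' i))
      (∑ i, L (c - p i) - ∑ i, L (c - p' i)) (Iic c) c := by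
    have h a : HasDerivWithinAt (fun x => φ (x - a)) (L (c - a)) (Iic c) c := by
      simpa using (hL (c - a)).comp_sub_const
    exact (HasDerivWithinAt.fun_sum fun i _ => h (p i)).sub (.fun_sum fun i _ => h (p' i))
  have := eq_of_hasDerivWithinAt_Ici_of_hasDerivWithinAt_Iic hF right left
  simp only [sum_sub_distrib]
  linarith

-- Continuity of the periodization: `B_k 0 = B_k 1` for `k ≠ 1`.
lemma bernoulliFun_fract_eq_add_one_sub_ceil {k : ℕ} (hk : k ≠ 1) (y : ℝ) :
    bernoulliFun k (Int.fract y) = bernoulliFun k (y + 1 - ⌈y⌉) := by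
  rcases Int.fract_eq_zero_or_add_one_sub_ceil y with h | h
  · obtain ⟨m, rfl⟩ := Int.fract_eq_zero_iff.1 h
    simp [bernoulliFun_eval_one, hk]
  · rw [h]

theorem hasDerivWithinAt_bernoulliFun_fract_Ici (k : ℕ) (x : ℝ) :
    HasDerivWithinAt (fun y => bernoulliFun k (Int.fract y))
      (k * bernoulliFun (k - 1) (Int.fract x)) (Ici x) x := by
  refine ((hasDerivAt_bernoulliFun k _).comp_sub_const x ⌊x⌋).hasDerivWithinAt
    |>.congr_of_eventuallyEq ?_ rfl
  filter_upwards [Ico_mem_nhdsGE (Int.lt_floor_add_one x)] with y hy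
  rw [Int.fract, Int.floor_eq_iff.2 ⟨(Int.floor_le x).trans hy.1, hy.2⟩]

theorem hasDerivWithinAt_bernoulliFun_fract_Iic {k : ℕ} (hk : k ≠ 1) (x : ℝ) :
    HasDerivWithinAt (fun y => bernoulliFun k (Int.fract y))
      (k * bernoulliFun (k - 1) (x + 1 - ⌈x⌉)) (Iic x) x := by
  have hx : x ∈ Ioc ((⌈x⌉ : ℝ) - 1) ⌈x⌉ := Int.ceil_eq_iff.1 rfl
  refine (((hasDerivAt_bernoulliFun k _).comp_sub_const x (⌈x⌉ - 1)).hasDerivWithinAt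
    |>.congr_of_eventuallyEq ?_ ?_).congr_deriv (by ring_nf)
  · filter_upwards [Ioc_mem_nhdsLE hx.1] with y hy
    rw [bernoulliFun_fract_eq_add_one_sub_ceil hk, Int.ceil_eq_iff.2 ⟨hy.1, hy.2.trans hx.2⟩]
    ring_nf
  · rw [bernoulliFun_fract_eq_add_one_sub_ceil hk]
    ring_nf

lemma add_one_sub_ceil_sub_fract {R : Type*} [Ring R] [LinearOrder R] [IsStrictOrderedRing R]
    [FloorRing R] (x : R) :
    x + 1 - ⌈x⌉ - Int.fract x = if Int.fract x = 0 then 1 else 0 := by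
  by_cases h : Int.fract x = 0
  · obtain ⟨m, rfl⟩ := Int.fract_eq_zero_iff.1 h
    simp
  · rw [Int.ceil_eq_add_one_sub_fract h, if_neg h]
    abel

lemma two_mul_bernoulliFun_one_add_one_sub_ceil_sub (x : ℝ) :
    2 * bernoulliFun 1 (x + 1 - ⌈x⌉) - 2 * bernoulliFun 1 (Int.fract x) =
      2 * if Int.fract x = 0 then 1 else 0 := by
  rw [bernoulliFun_one, bernoulliFun_one, ← add_one_sub_ceil_sub_fract]
  ring

lemma AddCircle.coe_eq_coe_iff_fract_sub_eq_zero (x y : ℝ) :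
    (x : AddCircle (1 : ℝ)) = y ↔ Int.fract (x - y) = 0 := by
  rw [← sub_eq_zero, ← AddCircle.coe_sub, AddCircle.coe_eq_zero_iff, Int.fract_eq_zero_iff]
  simp [eq_comm]

lemma count_map_coe_addCircle {ι : Type*} [Fintype ι] (p : ι → ℝ) (c : ℝ) :
    (Finset.univ.val.map fun i => (p i : AddCircle (1 : ℝ))).count (c : AddCircle (1 : ℝ)) =
      #{i | Int.fract (c - p i) = 0} := by
  simp only [Multiset.count_map, AddCircle.coe_eq_coe_iff_fract_sub_eq_zero]
  rfl

/-- If `g(x) = B₂(fract x)` and the function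
`F(x) = Σᵢ g(x − pᵢ) − Σᵢ g(x − p′ᵢ)` is differentiable everywhere, then the
multisets of the images of the `pᵢ` and the `p′ᵢ` in `ℝ/ℤ` coincide. -/
theorem green_function_differentiable_implies_retractions_agree
    (g : ℝ → ℝ)
    (hg : ∀ x : ℝ, g x = (Int.fract x) ^ 2 - Int.fract x + 1 / 6)
    (n : ℕ) (p p' : Fin n → ℝ)
    (hF : Differentiable ℝ
      (fun x : ℝ => (∑ i, g (x - p i)) - ∑ i, g (x - p' i))) :
    (Finset.univ.val.map fun i : Fin n => ((p i : ℝ) : AddCircle (1 : ℝ))) =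
    (Finset.univ.val.map fun i : Fin n => ((p' i : ℝ) : AddCircle (1 : ℝ))) := by
  obtain rfl : g = fun x => bernoulliFun 2 (Int.fract x) :=
    funext fun x => by rw [hg, bernoulliFun_two]; norm_num
  ext a
  induction a using QuotientAddGroup.induction_on with | H c => ?_
  have jumps := sum_sub_eq_sum_sub_of_differentiableAt (hasDerivWithinAt_bernoulliFun_fract_Ici 2)
    (hasDerivWithinAt_bernoulliFun_fract_Iic (by decide)) p p' (hF c)
  norm_num only [two_mul_bernoulliFun_one_add_one_sub_ceil_sub, ← mul_sum, sum_boole] at jumps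
  rw [count_map_coe_addCircle, count_map_coe_addCircle]
  exact_mod_cast mul_left_cancel₀ two_ne_zero jumps
end
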